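/- For a > 0 and b > 1 with a/log b ≤ 1/2, ∫_0^∞ exp(−a t b^t) dt ≤ e^{a/log b} · (−Ei(−a/log b))/log b ≤ e^{1/2}(−γ − log(a/log b) + 1/2)/log b. -/

import Mathlib

/-!
With `c = a / log b`, substitute `s = c + a t b^t` in `∫_{t>0} e^{-c} e^{-a t b^t} dt`.
Since `ds/dt = a b^t (1 + t log b) ≥ s log b`, the integral is at most
`(log b)⁻¹ ∫_{s>c} e^{-s}/s ds = -Ei(-c) / log b`.

For the second bound, integration by parts gives
`-Ei(-x) = ∫_x^∞ e^{-t} log t dt - e^{-x} log x`, and `∫_0^∞ e^{-t} log t dt = Γ'(1) = -γ`.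
What is left, `-∫_0^x e^{-t} log t dt`, is controlled by
`e^{-t} (log x - log t) ≤ log x - log t` on `(0, x]` and `∫_0^x (log x - log t) dt = x`.
-/

open MeasureTheory Set

/-- The exponential integral `Ei y` for `y < 0`, defined by
`Ei(-x) = -∫_x^∞ e^{-t}/t dt` for `x > 0`. -/
noncomputable def Ei (y : ℝ) : ℝ := -∫ t in Ioi (-y), Real.exp (-t) / t

open Real Filter Topology

theorem setIntegral_comp_le_of_le_abs_deriv {s t : Set ℝ} {φ φ' f w : ℝ → ℝ}
    (hs : MeasurableSet s) (ht : MeasurableSet t)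
    (hφ : ∀ x ∈ s, HasDerivWithinAt φ (φ' x) s x) (hinj : InjOn φ s) (hst : MapsTo φ s t)
    (hint : IntegrableOn (fun u => f u / w u) t) (hf : ∀ u ∈ t, 0 ≤ f u)
    (hw : ∀ u ∈ t, 0 < w u) (hwφ : ∀ x ∈ s, w (φ x) ≤ |φ' x|) :
    ∫ x in s, f (φ x) ≤ ∫ u in t, f u / w u := by
  have hint' : IntegrableOn (fun x => |φ' x| • (f (φ x) / w (φ x))) s :=
    (integrableOn_image_iff_integrableOn_abs_deriv_smul hs hφ hinj _).1
      (hint.mono_set hst.image_subset)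
  calc ∫ x in s, f (φ x)
      ≤ ∫ x in s, |φ' x| • (f (φ x) / w (φ x)) := by
        refine integral_mono_of_nonneg (ae_restrict_of_forall_mem hs fun x hx => hf _ (hst hx))
          hint' (ae_restrict_of_forall_mem hs fun x hx => ?_)
        simp only [smul_eq_mul]
        rw [mul_div_assoc', le_div_iff₀ (hw _ (hst hx)), mul_comm]
        exact mul_le_mul_of_nonneg_right (hwφ x hx) (hf _ (hst hx))
    _ = ∫ u in φ '' s, f u / w u :=
        (integral_image_eq_integral_abs_deriv_smul hs hφ hinj fun u => f u / w u).symm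
    _ ≤ ∫ u in t, f u / w u :=
        setIntegral_mono_set hint
          (ae_restrict_of_forall_mem ht fun u hu => div_nonneg (hf u hu) (hw u hu).le)
          (Eventually.of_forall hst.image_subset)

theorem neg_Ei_neg (x : ℝ) : -Ei (-x) = ∫ t in Ioi x, exp (-t) / t := by
  rw [Ei, neg_neg, neg_neg]

theorem integrableOn_exp_neg_div_self {x : ℝ} (hx : 0 < x) :
    IntegrableOn (fun t => exp (-t) / t) (Ioi x) := by
  have hcont : ContinuousOn (fun t => exp (-t) / t) (Ioi x) :=
    (continuous_exp.comp continuous_neg).continuousOn.div continuousOn_id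
      fun t ht => (hx.trans ht).ne'
  refine Integrable.mono' ((exp_neg_integrableOn_Ioi x one_pos).const_mul x⁻¹)
    (hcont.aestronglyMeasurable measurableSet_Ioi) ?_
  filter_upwards [ae_restrict_mem measurableSet_Ioi] with t ht
  have ht0 : 0 < t := hx.trans ht
  rw [norm_of_nonneg (by positivity), neg_one_mul, div_eq_inv_mul]
  exact mul_le_mul_of_nonneg_right (inv_anti₀ hx ht.le) (exp_pos _).le

theorem integral_exp_neg_mul_mul_rpow_le_neg_Ei {a b : ℝ} (ha : 0 < a) (hb : 1 < b) :
    ∫ t in Ioi 0, exp (-(a * t * b ^ t))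
      ≤ exp (a / log b) * (-Ei (-(a / log b))) / log b := by
  have hb0 : 0 < b := one_pos.trans hb
  have hlb : 0 < log b := log_pos hb
  set c := a / log b with hc_def
  have hc : 0 < c := div_pos ha hlb
  have hderiv (t : ℝ) :
      HasDerivAt (fun t => c + a * t * b ^ t) (a * b ^ t * (1 + t * log b)) t := by
    refine ((((hasDerivAt_id' t).const_mul a).mul
      (hasStrictDerivAt_const_rpow hb0 t).hasDerivAt).const_add c).congr_deriv ?_
    ring
  have hmono : StrictMonoOn (fun t => c + a * t * b ^ t) (Ioi 0) := by
    intro s (hs : 0 < s) t _ hst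
    have : s * b ^ s < t * b ^ t :=
      (mul_lt_mul_of_pos_right hst (rpow_pos_of_pos hb0 s)).trans_le
        (mul_le_mul_of_nonneg_left (rpow_le_rpow_of_exponent_le hb.le hst.le) (hs.trans hst).le)
    simp only [mul_assoc]
    linarith [mul_lt_mul_of_pos_left this ha]
  have hmaps : MapsTo (fun t => c + a * t * b ^ t) (Ioi 0) (Ioi c) := fun t (ht : 0 < t) => by
    have : 0 < a * t * b ^ t := by positivity
    simp only [mem_Ioi]
    linarith
  have hderiv_ge (t : ℝ) (ht : t ∈ Ioi 0) :
      log b * (c + a * t * b ^ t) ≤ |a * b ^ t * (1 + t * log b)| := by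
    have hbt : 1 ≤ b ^ t := one_le_rpow hb.le (le_of_lt ht)
    have hct : log b * c = a := by rw [hc_def]; field_simp
    have ht : 0 < t := ht
    rw [abs_of_pos (by positivity)]
    linarith [mul_le_mul_of_nonneg_left hbt ha.le]
  have key :
      ∫ t in Ioi 0, exp (-(c + a * t * b ^ t)) ≤ ∫ s in Ioi c, exp (-s) / (log b * s) :=
    setIntegral_comp_le_of_le_abs_deriv (f := fun s => exp (-s)) (w := fun s => log b * s)
      measurableSet_Ioi measurableSet_Ioi (fun t _ => (hderiv t).hasDerivWithinAt)
      hmono.injOn hmaps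
      (by simp_rw [div_mul_eq_div_div_swap]; exact (integrableOn_exp_neg_div_self hc).div_const _)
      (fun s _ => (exp_pos _).le) (fun s hs => mul_pos hlb (hc.trans hs)) hderiv_ge
  simp_rw [neg_add, exp_add, div_mul_eq_div_div_swap] at key
  rw [integral_const_mul, integral_div, ← neg_Ei_neg] at key
  calc ∫ t in Ioi 0, exp (-(a * t * b ^ t))
      = exp c * (exp (-c) * ∫ t in Ioi 0, exp (-(a * t * b ^ t))) := by
        rw [← mul_assoc, ← exp_add, add_neg_cancel, exp_zero, one_mul]
    _ ≤ exp c * (-Ei (-c) / log b) := by gcongr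
    _ = exp c * (-Ei (-c)) / log b := (mul_div_assoc _ _ _).symm

theorem abs_log_le_two_mul_rpow_neg_half_add {t : ℝ} (ht : 0 < t) :
    |log t| ≤ 2 * t ^ (-(1 / 2 : ℝ)) + t := by
  have hupper : log t ≤ t := (log_le_sub_one_of_pos ht).trans (by linarith)
  have hlower : -log t ≤ 2 * t ^ (-(1 / 2 : ℝ)) := by
    have := log_le_rpow_div (inv_pos.2 ht).le (by norm_num : (0 : ℝ) < 1 / 2)
    rwa [log_inv, inv_rpow ht.le, ← rpow_neg ht.le, div_eq_mul_inv, mul_comm, inv_div,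
      div_one] at this
  have : 0 < t ^ (-(1 / 2 : ℝ)) := rpow_pos_of_pos ht _
  rw [abs_le]
  constructor <;> linarith

theorem integrableOn_exp_neg_mul_log : IntegrableOn (fun t => exp (-t) * log t) (Ioi 0) := by
  have hbound : IntegrableOn (fun t => exp (-t) * (2 * t ^ (-(1 / 2 : ℝ)) + t)) (Ioi 0) := by
    have h₁ := GammaIntegral_convergent (by norm_num : (0 : ℝ) < 1 / 2)
    have h₂ := GammaIntegral_convergent (by norm_num : (0 : ℝ) < 2)
    rw [show (1 / 2 : ℝ) - 1 = -(1 / 2) by norm_num] at h₁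
    simp_rw [show (2 : ℝ) - 1 = 1 by norm_num, rpow_one] at h₂
    refine IntegrableOn.congr_fun ((h₁.const_mul 2).add h₂) (fun t _ => ?_) measurableSet_Ioi
    simp only [Pi.add_apply]
    ring
  have hcont : ContinuousOn (fun t => exp (-t) * log t) (Ioi 0) :=
    (continuous_exp.comp continuous_neg).continuousOn.mul
      (continuousOn_log.mono fun _ ht => (ne_of_gt ht))
  refine Integrable.mono' hbound (hcont.aestronglyMeasurable measurableSet_Ioi) ?_
  filter_upwards [ae_restrict_mem measurableSet_Ioi] with t ht
  rw [norm_mul, norm_of_nonneg (exp_pos _).le, norm_eq_abs]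
  exact mul_le_mul_of_nonneg_left (abs_log_le_two_mul_rpow_neg_half_add ht) (exp_pos _).le

theorem integral_exp_neg_mul_log :
    ∫ t in Ioi 0, exp (-t) * log t = -eulerMascheroniConstant := by
  have hGammaIntegral :
      HasDerivAt Complex.GammaIntegral (∫ t in Ioi 0, exp (-t) * log t : ℝ) 1 := by
    rw [← integral_complex_ofReal]
    refine (Complex.hasDerivAt_GammaIntegral (by norm_num)).congr_deriv
      (setIntegral_congr_fun measurableSet_Ioi fun t _ => ?_)
    simp only [sub_self, Complex.cpow_zero, one_mul]
    push_cast
    ring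
  have hGamma : Complex.Gamma =ᶠ[𝓝 1] Complex.GammaIntegral := by
    filter_upwards [(isOpen_lt continuous_const Complex.continuous_re).mem_nhds
      (show (0 : ℝ) < (1 : ℂ).re by norm_num)] with s hs
    exact Complex.Gamma_eq_integral hs
  exact_mod_cast
    (hGammaIntegral.congr_of_eventuallyEq hGamma).unique Complex.hasDerivAt_Gamma_one

theorem tendsto_exp_neg_mul_log_atTop : Tendsto (fun t => exp (-t) * log t) atTop (𝓝 0) := by
  have h : Tendsto (fun t => exp (-t) * t) atTop (𝓝 0) := by
    simpa [mul_comm] using tendsto_pow_mul_exp_neg_atTop_nhds_zero 1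
  exact ((Asymptotics.isBigO_refl (fun t => exp (-t)) atTop).mul
    isLittleO_log_id_atTop.isBigO).trans_tendsto h

theorem integral_Ioi_exp_neg_div_self {x : ℝ} (hx : 0 < x) :
    ∫ t in Ioi x, exp (-t) / t = (∫ t in Ioi x, exp (-t) * log t) - exp (-x) * log x := by
  have hlog : ∀ t ∈ Ioi x, HasDerivAt log t⁻¹ t := fun t ht => hasDerivAt_log (hx.trans ht).ne'
  have hexp : ∀ t ∈ Ioi x, HasDerivAt (fun t => exp (-t)) (exp (-t) * -1) t :=
    fun t _ => (hasDerivAt_neg t).exp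
  have hint : IntegrableOn (fun t => exp (-t) * t⁻¹) (Ioi x) := by
    simpa only [div_eq_mul_inv] using integrableOn_exp_neg_div_self hx
  have hint' : IntegrableOn (fun t => exp (-t) * -1 * log t) (Ioi x) := by
    refine (integrableOn_exp_neg_mul_log.mono_set (Ioi_subset_Ioi hx.le)).neg.congr_fun
      (fun t _ => ?_) measurableSet_Ioi
    simp only [Pi.neg_apply]
    ring
  have hparts :=
    integral_Ioi_mul_deriv_eq_deriv_mul (a' := exp (-x) * log x) hexp hlog hint hint'
    (((continuous_exp.comp continuous_neg).continuousAt.mul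
      (continuousAt_log hx.ne')).tendsto.mono_left nhdsWithin_le_nhds)
    tendsto_exp_neg_mul_log_atTop
  simp only [← div_eq_mul_inv, mul_neg_one, neg_mul, integral_neg] at hparts
  linarith

theorem le_integral_exp_neg_mul_log {x : ℝ} (hx : 0 ≤ x) :
    (1 - exp (-x)) * log x - x ≤ ∫ t in 0..x, exp (-t) * log t := by
  have hexp : Continuous fun t => exp (-t) := continuous_exp.comp continuous_neg
  have hlog : IntervalIntegrable log volume 0 x := intervalIntegral.intervalIntegrable_log'
  have hdiff : IntervalIntegrable (fun t => log x - log t) volume 0 x :=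
    intervalIntegrable_const.sub hlog
  have hmono : ∫ t in 0..x, exp (-t) * (log x - log t) ≤ ∫ t in 0..x, (log x - log t) := by
    refine intervalIntegral.integral_mono_on_of_le_Ioo hx
      (hdiff.continuousOn_mul hexp.continuousOn) hdiff fun t ht => ?_
    have : log t ≤ log x := log_le_log ht.1 ht.2.le
    have : exp (-t) ≤ 1 := exp_le_one_iff.2 (by linarith [ht.1])
    nlinarith
  have hright : ∫ t in 0..x, (log x - log t) = x := by
    rw [intervalIntegral.integral_sub intervalIntegrable_const hlog,
      intervalIntegral.integral_const, integral_log]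
    simp
  have hleft : ∫ t in 0..x, exp (-t) * (log x - log t)
      = (1 - exp (-x)) * log x - ∫ t in 0..x, exp (-t) * log t := by
    simp_rw [mul_sub]
    rw [intervalIntegral.integral_sub (hexp.intervalIntegrable _ _ |>.mul_const _)
      (hlog.continuousOn_mul hexp.continuousOn), intervalIntegral.integral_mul_const]
    simp [intervalIntegral.integral_comp_neg]
  linarith

theorem neg_Ei_neg_le {x : ℝ} (hx : 0 < x) :
    -Ei (-x) ≤ -eulerMascheroniConstant - log x + x := by
  have hsplit := intervalIntegral.integral_interval_add_Ioi integrableOn_exp_neg_mul_log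
    (integrableOn_exp_neg_mul_log.mono_set (Ioi_subset_Ioi hx.le))
  rw [integral_exp_neg_mul_log] at hsplit
  rw [neg_Ei_neg, integral_Ioi_exp_neg_div_self hx]
  linarith [le_integral_exp_neg_mul_log hx.le]

/-- For `a > 0`, `b > 1` with `a/log b ≤ 1/2`,
`∫_0^∞ exp(-a t b^t) dt ≤ e^{a/log b} (-Ei(-a/log b))/log b
  ≤ e^{1/2} (-γ - log(a/log b) + 1/2)/log b`. -/
theorem integral_exp_Ei_bound (a b : ℝ) (ha : 0 < a) (hb : 1 < b)
    (hsmall : a / Real.log b ≤ 1 / 2) :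
    (∫ t in Ioi (0 : ℝ), Real.exp (-(a * t * b ^ t)))
        ≤ Real.exp (a / Real.log b) * (-Ei (-(a / Real.log b))) / Real.log b ∧
      Real.exp (a / Real.log b) * (-Ei (-(a / Real.log b))) / Real.log b
        ≤ Real.exp (1 / 2) *
            (-Real.eulerMascheroniConstant - Real.log (a / Real.log b) + 1 / 2)
              / Real.log b := by
  refine ⟨integral_exp_neg_mul_mul_rpow_le_neg_Ei ha hb, ?_⟩
  have hlb : 0 < log b := log_pos hb
  have hc : 0 < a / log b := div_pos ha hlb
  have hEi : 0 ≤ -Ei (-(a / log b)) := by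
    rw [neg_Ei_neg]
    exact setIntegral_nonneg measurableSet_Ioi fun t ht =>
      div_nonneg (exp_pos _).le (hc.trans ht).le
  gcongr ?_ * ?_ / _
  · exact exp_le_exp.2 hsmall
  · linarith [neg_Ei_neg_le hc]
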